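/- arXiv:2509.06059 — 5 statements merged into one kernel-verified Lean document; each statement's English description precedes it below -/
import Mathlib

section
/- Consider a commutative diagram of Z-modules with exact rows A → B → C → D → E and A' → B' → C' → D' → E' with vertical maps α, β, γ, δ, ε. Assume: (1) β and δ are surjective and are k-truncated isomorphisms; (2) α is surjective and ε restricted to kE is injective; (3) im(f: A → B) ⊆ kB and im(i: D → E) ⊆ kE; (4) for all b ∈ B, g(b) ∈ kC implies b ∈ kB. Then γ is surjective and is a k-truncated isomorphism. -/
/-- The `k`-torsion subgroup `T_k(M) = {a ∈ M | k • a = 0}` of an abelian group `M`. -/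
def torsionSub (k : ℕ) (M : Type*) [AddCommGroup M] : AddSubgroup M where
  carrier := {a | k • a = 0}
  zero_mem' := by simp
  add_mem' := by
    intro a b ha hb
    simp only [Set.mem_setOf_eq] at *
    rw [smul_add, ha, hb, add_zero]
  neg_mem' := by
    intro a ha
    simp only [Set.mem_setOf_eq] at *
    rw [smul_neg, ha, neg_zero]

theorem torsionSub_le_comap {M₁ M₂ : Type*} [AddCommGroup M₁] [AddCommGroup M₂]
    (k : ℕ) (φ : M₁ →+ M₂) : torsionSub k M₁ ≤ (torsionSub k M₂).comap φ := by
  intro a ha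
  have h1 : k • a = 0 := ha
  show k • φ a = 0
  rw [← map_nsmul, h1, map_zero]

/-- `φ : M₁ → M₂` is a `k`-truncated isomorphism if the induced map
`M₁/T_k(M₁) → M₂/T_k(M₂)` is an isomorphism. -/
def IsTruncatedIso (k : ℕ) {M₁ M₂ : Type*} [AddCommGroup M₁] [AddCommGroup M₂]
    (φ : M₁ →+ M₂) : Prop :=
  Function.Bijective
    (QuotientAddGroup.map (torsionSub k M₁) (torsionSub k M₂) φ (torsionSub_le_comap k φ))

lemma IsTruncatedIso.nsmul_eq_zero {k : ℕ} {M₁ M₂ : Type*} [AddCommGroup M₁] [AddCommGroup M₂]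
    {φ : M₁ →+ M₂} (h : IsTruncatedIso k φ) {x : M₁} (hx : k • φ x = 0) : k • x = 0 := by
  have h1 : (QuotientAddGroup.map (torsionSub k M₁) (torsionSub k M₂) φ (torsionSub_le_comap k φ))
      (QuotientAddGroup.mk x) = 0 := by
    rw [QuotientAddGroup.map_mk]
    exact (QuotientAddGroup.eq_zero_iff _).mpr hx
  have h2 : (QuotientAddGroup.mk x : M₁ ⧸ torsionSub k M₁) = 0 :=
    h.1 (by rw [h1, map_zero])
  exact (QuotientAddGroup.eq_zero_iff _).mp h2

/-- Lemma 6.3: a five-lemma type statement for `k`-truncated isomorphisms. -/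
theorem five_lemma_truncated
    {A B C D E A' B' C' D' E' : Type*}
    [AddCommGroup A] [AddCommGroup B] [AddCommGroup C] [AddCommGroup D] [AddCommGroup E]
    [AddCommGroup A'] [AddCommGroup B'] [AddCommGroup C'] [AddCommGroup D'] [AddCommGroup E']
    (k : ℕ) (hk : 0 < k)
    (f : A →+ B) (g : B →+ C) (h : C →+ D) (i : D →+ E)
    (f' : A' →+ B') (g' : B' →+ C') (h' : C' →+ D') (i' : D' →+ E')
    (α : A →+ A') (β : B →+ B') (γ : C →+ C') (δ : D →+ D') (ε : E →+ E')
    (sq1 : ∀ a, β (f a) = f' (α a)) (sq2 : ∀ b, γ (g b) = g' (β b))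
    (sq3 : ∀ c, δ (h c) = h' (γ c)) (sq4 : ∀ d, ε (i d) = i' (δ d))
    (ex1 : Function.Exact ⇑f ⇑g) (ex2 : Function.Exact ⇑g ⇑h) (ex3 : Function.Exact ⇑h ⇑i)
    (ex1' : Function.Exact ⇑f' ⇑g') (ex2' : Function.Exact ⇑g' ⇑h')
    (ex3' : Function.Exact ⇑h' ⇑i')
    -- (1) β and δ are surjective k-truncated isomorphisms
    (hβ : Function.Surjective β) (hβt : IsTruncatedIso k β)
    (hδ : Function.Surjective δ) (hδt : IsTruncatedIso k δ)
    -- (2) α is surjective and ε restricted to kE is injective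
    (hα : Function.Surjective α)
    (hε : Set.InjOn ε {x : E | ∃ z, k • z = x})
    -- (3) im f ⊆ kB and im i ⊆ kE
    (hf : ∀ a, ∃ b, k • b = f a)
    (hi : ∀ d, ∃ e, k • e = i d)
    -- (4) g(b) ∈ kC implies b ∈ kB
    (hg : ∀ b, (∃ c, k • c = g b) → ∃ b₀, k • b₀ = b) :
    Function.Surjective γ ∧ IsTruncatedIso k γ := by
  -- Surjectivity of γ
  have hγsurj : Function.Surjective γ := by
    intro c'
    obtain ⟨d, hd⟩ := hδ (h' c')
    have hεid : ε (i d) = 0 := by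
      rw [sq4, hd]; exact ex3'.apply_apply_eq_zero c'
    have hid : i d = 0 :=
      hε (hi d) ⟨0, smul_zero k⟩ (by rw [hεid, map_zero])
    obtain ⟨c, hc⟩ := (ex3 d).mp hid
    have h5 : h' (c' - γ c) = 0 := by
      rw [map_sub, ← sq3, hc, hd, sub_self]
    obtain ⟨b', hb'⟩ := (ex2' _).mp h5
    obtain ⟨b, hb⟩ := hβ b'
    refine ⟨c + g b, ?_⟩
    rw [map_add, sq2, hb, hb']
    abel
  -- Truncated injectivity of γ
  have hγinj : ∀ c : C, k • γ c = 0 → k • c = 0 := by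
    intro c hc
    have h1 : k • δ (h c) = 0 := by rw [sq3, ← map_nsmul, hc, map_zero]
    have h2 : h (k • c) = 0 := by rw [map_nsmul, hδt.nsmul_eq_zero h1]
    obtain ⟨b, hb⟩ := (ex2 _).mp h2
    have h4 : g' (β b) = 0 := by rw [← sq2, hb, map_nsmul, hc]
    obtain ⟨a', ha'⟩ := (ex1' _).mp h4
    obtain ⟨a, ha⟩ := hα a'
    have h5 : β (b - f a) = 0 := by rw [map_sub, sq1, ha, ha', sub_self]
    have h6 : g (b - f a) = k • c := by
      rw [map_sub, ex1.apply_apply_eq_zero, sub_zero, hb]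
    obtain ⟨u, hu⟩ := hg (b - f a) ⟨c, h6.symm⟩
    have h7 : k • β u = 0 := by rw [← map_nsmul, hu, h5]
    have h8 : k • u = 0 := hβt.nsmul_eq_zero h7
    rw [← h6, ← hu, h8, map_zero]
  refine ⟨hγsurj, ?_, ?_⟩
  · rw [injective_iff_map_eq_zero]
    intro q
    induction q using QuotientAddGroup.induction_on with
    | H c =>
      intro hq
      rw [QuotientAddGroup.map_mk] at hq
      exact (QuotientAddGroup.eq_zero_iff _).mpr
        (hγinj c ((QuotientAddGroup.eq_zero_iff _).mp hq))
  · intro q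
    induction q using QuotientAddGroup.induction_on with
    | H c' =>
      obtain ⟨c, hc⟩ := hγsurj c'
      exact ⟨QuotientAddGroup.mk c, by rw [QuotientAddGroup.map_mk, hc]⟩
end

section
/- Consider a commutative diagram of Z-modules with exact rows A → B → C → D → E and A' → B' → C' → D' → E' with vertical maps α, β, γ, δ, ε. Assume: (1) β and δ are surjective and are k-truncated isomorphisms; (2) α is surjective and ε restricted to kE is injective; (3) the maps A'⊗Z/k → B'⊗Z/k and D'⊗Z/k → E'⊗Z/k induced by f' and i' are injective; (4) im(h: C → D) ⊆ kD and the k-torsion T_k(C') is contained in the image of g': B' → C'. Then γ is surjective and is a k-truncated isomorphism. -/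
/-- The subgroup `kM = {y | ∃ x, k • x = y}` of an abelian group `M`. -/
def kSub (k : ℕ) (M : Type*) [AddCommGroup M] : AddSubgroup M where
  carrier := {y | ∃ x, k • x = y}
  zero_mem' := ⟨0, smul_zero k⟩
  add_mem' := by
    rintro a b ⟨x, hx⟩ ⟨y, hy⟩
    exact ⟨x + y, by rw [smul_add, hx, hy]⟩
  neg_mem' := by
    rintro a ⟨x, hx⟩
    exact ⟨-x, by rw [smul_neg, hx]⟩

theorem kSub_le_comap {M₁ M₂ : Type*} [AddCommGroup M₁] [AddCommGroup M₂]
    (k : ℕ) (φ : M₁ →+ M₂) : kSub k M₁ ≤ (kSub k M₂).comap φ := by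
  rintro a ⟨x, hx⟩
  exact ⟨φ x, by rw [← map_nsmul, hx]⟩


theorem aux_trunc_inj {M N : Type*} [AddCommGroup M] [AddCommGroup N] {k : ℕ} {φ : M →+ N}
    (hφ : Function.Injective
      (QuotientAddGroup.map (torsionSub k M) (torsionSub k N) φ (torsionSub_le_comap k φ)))
    {m : M} (hm : k • φ m = 0) : k • m = 0 := by
  have h1 : QuotientAddGroup.map (torsionSub k M) (torsionSub k N) φ (torsionSub_le_comap k φ)
      (m : M ⧸ torsionSub k M) =
      QuotientAddGroup.map (torsionSub k M) (torsionSub k N) φ (torsionSub_le_comap k φ) 0 := by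
    rw [map_zero, QuotientAddGroup.map_mk]
    exact (QuotientAddGroup.eq_zero_iff (φ m)).mpr hm
  exact (QuotientAddGroup.eq_zero_iff m).mp (hφ h1)

theorem aux_kSub {M N : Type*} [AddCommGroup M] [AddCommGroup N] {k : ℕ} {φ : M →+ N}
    (hφ : Function.Injective
      (QuotientAddGroup.map (kSub k M) (kSub k N) φ (kSub_le_comap k φ)))
    {m : M} (hm : φ m ∈ kSub k N) : m ∈ kSub k M := by
  have h1 : QuotientAddGroup.map (kSub k M) (kSub k N) φ (kSub_le_comap k φ)
      (m : M ⧸ kSub k M) =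
      QuotientAddGroup.map (kSub k M) (kSub k N) φ (kSub_le_comap k φ) 0 := by
    rw [map_zero, QuotientAddGroup.map_mk]
    exact (QuotientAddGroup.eq_zero_iff (φ m)).mpr hm
  exact (QuotientAddGroup.eq_zero_iff m).mp (hφ h1)

/-- Lemma 6.4: a variant five-lemma for `k`-truncated isomorphisms;
the map `M ⊗ ℤ/k → N ⊗ ℤ/k` induced by `φ` is identified with the induced map
`M/kM → N/kN`. -/
theorem five_lemma_truncated_variant
    {A B C D E A' B' C' D' E' : Type*}
    [AddCommGroup A] [AddCommGroup B] [AddCommGroup C] [AddCommGroup D] [AddCommGroup E]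
    [AddCommGroup A'] [AddCommGroup B'] [AddCommGroup C'] [AddCommGroup D'] [AddCommGroup E']
    (k : ℕ) (hk : 0 < k)
    (f : A →+ B) (g : B →+ C) (h : C →+ D) (i : D →+ E)
    (f' : A' →+ B') (g' : B' →+ C') (h' : C' →+ D') (i' : D' →+ E')
    (α : A →+ A') (β : B →+ B') (γ : C →+ C') (δ : D →+ D') (ε : E →+ E')
    (sq1 : ∀ a, β (f a) = f' (α a)) (sq2 : ∀ b, γ (g b) = g' (β b))
    (sq3 : ∀ c, δ (h c) = h' (γ c)) (sq4 : ∀ d, ε (i d) = i' (δ d))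
    (ex1 : Function.Exact ⇑f ⇑g) (ex2 : Function.Exact ⇑g ⇑h) (ex3 : Function.Exact ⇑h ⇑i)
    (ex1' : Function.Exact ⇑f' ⇑g') (ex2' : Function.Exact ⇑g' ⇑h')
    (ex3' : Function.Exact ⇑h' ⇑i')
    -- (1) β and δ are surjective k-truncated isomorphisms
    (hβ : Function.Surjective β) (hβt : IsTruncatedIso k β)
    (hδ : Function.Surjective δ) (hδt : IsTruncatedIso k δ)
    -- (2) α is surjective and ε restricted to kE is injective
    (hα : Function.Surjective α)
    (hε : Set.InjOn ε {x : E | ∃ z, k • z = x})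
    -- (3) A'⊗ℤ/k → B'⊗ℤ/k and D'⊗ℤ/k → E'⊗ℤ/k are injective
    (hf' : Function.Injective
      (QuotientAddGroup.map (kSub k A') (kSub k B') f' (kSub_le_comap k f')))
    (hi' : Function.Injective
      (QuotientAddGroup.map (kSub k D') (kSub k E') i' (kSub_le_comap k i')))
    -- (4) im h ⊆ kD and T_k(C') ⊆ im g'
    (hh : ∀ c, ∃ d, k • d = h c)
    (hT : ∀ c' : C', k • c' = 0 → ∃ b', g' b' = c') :
    Function.Surjective γ ∧ IsTruncatedIso k γ := by
  -- Lemma L for β and δ: they reflect "k-divisibility kills"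
  have Lβ : ∀ m : B, k • β m = 0 → k • m = 0 := fun m hm => aux_trunc_inj hβt.1 hm
  have Lδ : ∀ m : D, k • δ m = 0 → k • m = 0 := fun m hm => aux_trunc_inj hδt.1 hm
  -- Surjectivity of γ
  have hγ : Function.Surjective γ := by
    intro c'
    have h1 : h' c' ∈ kSub k D' := by
      refine aux_kSub hi' ?_
      rw [ex3'.apply_apply_eq_zero c']
      exact zero_mem _
    obtain ⟨d'₀, hd'₀⟩ := h1
    obtain ⟨d₀, hd₀⟩ := hδ d'₀
    have h2 : i (k • d₀) = 0 := by
      refine hε ⟨i d₀, (map_nsmul i k d₀).symm⟩ ⟨0, smul_zero k⟩ ?_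
      rw [map_zero, sq4, map_nsmul, hd₀, hd'₀, ex3'.apply_apply_eq_zero c']
    obtain ⟨c₁, hc₁⟩ := (ex3 (k • d₀)).mp h2
    have h3 : h' (c' - γ c₁) = 0 := by
      rw [map_sub, ← sq3, hc₁, map_nsmul, hd₀, hd'₀, sub_self]
    obtain ⟨b', hb'⟩ := (ex2' (c' - γ c₁)).mp h3
    obtain ⟨b, hb⟩ := hβ b'
    refine ⟨c₁ + g b, ?_⟩
    rw [map_add, sq2, hb, hb']
    abel
  -- Key: γ reflects k-torsion
  have key : ∀ c : C, k • γ c = 0 → k • c = 0 := by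
    intro c hc
    obtain ⟨b₁', hb₁'⟩ := hT (γ c) hc
    have h1 : δ (h c) = 0 := by rw [sq3, ← hb₁', ex2'.apply_apply_eq_zero]
    obtain ⟨d₀, hd₀⟩ := hh c
    have h2 : h c = 0 := by
      have h2a : k • d₀ = 0 := Lδ d₀ (by rw [← map_nsmul, hd₀, h1])
      rw [← hd₀, h2a]
    obtain ⟨b, hb⟩ := (ex2 c).mp h2
    have h3 : g' (β b - b₁') = 0 := by rw [map_sub, ← sq2, hb, hb₁', sub_self]
    obtain ⟨a', ha'⟩ := (ex1' (β b - b₁')).mp h3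
    have h4 : g' (k • b₁') = 0 := by rw [map_nsmul, hb₁', hc]
    obtain ⟨a₂', ha₂'⟩ := (ex1' (k • b₁')).mp h4
    have h5 : f' (a₂' + k • a') = β (k • b) := by
      rw [map_add, ha₂', map_nsmul, ha', map_nsmul, smul_sub]
      abel
    have h6 : a₂' + k • a' ∈ kSub k A' := by
      refine aux_kSub hf' ?_
      rw [h5]
      exact ⟨β b, (map_nsmul β k b).symm⟩
    obtain ⟨a₃', ha₃'⟩ := h6
    obtain ⟨a₃, ha₃⟩ := hα a₃'
    have h7 : k • (b - f a₃) = 0 := by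
      refine Lβ (b - f a₃) ?_
      rw [map_sub, smul_sub, ← map_nsmul β k b, ← h5, ← ha₃', sq1, ha₃,
        ← map_nsmul f' k a₃', sub_self]
    have h8 : k • b = k • f a₃ := by
      have h8a : k • b - k • f a₃ = 0 := by rw [← smul_sub]; exact h7
      exact sub_eq_zero.mp h8a
    rw [← hb, ← map_nsmul g k b, h8, ← map_nsmul f k a₃, ex1.apply_apply_eq_zero]
  refine ⟨hγ, ?_, ?_⟩
  · -- injectivity of the induced map
    refine (injective_iff_map_eq_zero _).mpr ?_
    intro q hq
    obtain ⟨c, rfl⟩ := QuotientAddGroup.mk_surjective q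
    rw [QuotientAddGroup.map_mk] at hq
    have h1 : k • γ c = 0 := (QuotientAddGroup.eq_zero_iff (γ c)).mp hq
    exact (QuotientAddGroup.eq_zero_iff c).mpr (key c h1)
  · -- surjectivity of the induced map
    intro q
    obtain ⟨c', rfl⟩ := QuotientAddGroup.mk_surjective q
    obtain ⟨c, hc⟩ := hγ c'
    exact ⟨(c : C ⧸ torsionSub k C), by rw [QuotientAddGroup.map_mk, hc]⟩
end

section
/- Let K be a shellable pure (n−1)-dimensional simplicial complex with shelling σ₁,…,σ_s and partial complexes K_j = ∪_{i≤j} 2^{σ_i}, with restriction faces r(σ_j). Then for any subset ω ⊆ [m], the relative simplicial cohomology H^i((K_j)_ω, (K_{j−1})_ω; Z) is Z (generated by the dual of r(σ_j)) if ω ∩ σ_j = r(σ_j) and i = dim r(σ_j), and is 0 otherwise. -/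
open Finset
open scoped Classical

noncomputable section

/-- `KF σ j τ`: `τ` is a face of `K_j = 2^{σ₁} ∪ … ∪ 2^{σ_j}` (0-based: faces contained
in some `σ i` with `i < j`). -/
def KF {s : ℕ} (σ : Fin s → Finset ℕ) (j : ℕ) (τ : Finset ℕ) : Prop :=
  ∃ i : Fin s, (i : ℕ) < j ∧ τ ⊆ σ i

/-- The relative faces of the pair `((K_j)_ω, (K_{j−1})_ω)` of cardinality `c`
(a face of cardinality `c` lies in simplicial degree `c − 1`). -/
def RelFace {s : ℕ} (σ : Fin s → Finset ℕ) (j : ℕ) (ω : Finset ℕ) (c : ℕ) : Type :=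
  {τ : Finset ℕ // (τ ⊆ ω ∧ KF σ (j + 1) τ ∧ ¬ KF σ j τ) ∧ τ.card = c}

/-- Relative simplicial cochains of the pair in cardinality `c`. -/
abbrev RelCochain {s : ℕ} (σ : Fin s → Finset ℕ) (j : ℕ) (ω : Finset ℕ) (c : ℕ) : Type :=
  RelFace σ j ω c → ℤ

/-- The relative simplicial coboundary (orientations from the natural order on the
vertices): `(δφ)(τ) = Σ_{v∈τ} (−1)^{|{x∈τ : x<v}|} φ(τ∖v)`, where faces outside the
relative complex contribute `0`. -/
def relDelta {s : ℕ} (σ : Fin s → Finset ℕ) (j : ℕ) (ω : Finset ℕ) (c : ℕ)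
    (φ : RelCochain σ j ω c) : RelCochain σ j ω (c + 1) :=
  fun τ =>
    ∑ v ∈ τ.1.attach,
      if h : (τ.1.erase v.1 ⊆ ω ∧ KF σ (j + 1) (τ.1.erase v.1) ∧ ¬ KF σ j (τ.1.erase v.1)) then
        (-1 : ℤ) ^ ((τ.1.filter (· < v.1)).card) *
          φ ⟨τ.1.erase v.1, h, by
            rw [Finset.card_erase_of_mem v.2, τ.2.2]; omega⟩
      else 0

/-- The cochain dual to a face `r` (in cardinality `|r|`). -/
def dualCochain {s : ℕ} (σ : Fin s → Finset ℕ) (j : ℕ) (ω : Finset ℕ) (c : ℕ)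
    (r : Finset ℕ) : RelCochain σ j ω c :=
  fun τ => if τ.1 = r then 1 else 0

/-! The relative faces of `((K_j)_ω, (K_{j−1})_ω)` are exactly the `τ` with
`r(σ_j) ⊆ τ ⊆ ω ∩ σ_j`. If some vertex `v` of `ω ∩ σ_j` lies outside `r(σ_j)`, coning off
with apex `v` (`φ ↦ ± φ(τ ∪ v)`) is a contracting homotopy of the relative cochain complex,
so it is acyclic. Otherwise `r(σ_j)` is the only relative face (or there is none at all),
and the cohomology is `ℤ`, generated by its dual, in that single degree. -/

abbrev IsRelFace {s : ℕ} (σ : Fin s → Finset ℕ) (j : ℕ) (ω : Finset ℕ) (τ : Finset ℕ) : Prop :=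
  τ ⊆ ω ∧ KF σ (j + 1) τ ∧ ¬ KF σ j τ

lemma isRelFace_iff_of_shelling {s : ℕ} {σ : Fin s → Finset ℕ} {j : Fin s} {ω r : Finset ℕ}
    (hshell : ∀ τ : Finset ℕ, τ ⊆ σ j → ((¬ ∃ i : Fin s, i < j ∧ τ ⊆ σ i) ↔ r ⊆ τ))
    (τ : Finset ℕ) :
    IsRelFace σ j ω τ ↔ r ⊆ τ ∧ τ ⊆ ω ∩ σ j := by
  constructor
  · rintro ⟨hτω, ⟨i, hi, hτi⟩, hnew⟩
    have hij : ¬ (i : ℕ) < j := fun h => hnew ⟨i, h, hτi⟩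
    obtain rfl : i = j := Fin.ext (by omega)
    exact ⟨(hshell τ hτi).1 hnew, subset_inter hτω hτi⟩
  · rintro ⟨hrτ, hτ⟩
    have hτσ : τ ⊆ σ j := hτ.trans inter_subset_right
    exact ⟨hτ.trans inter_subset_left, ⟨j, lt_add_one _, hτσ⟩, (hshell τ hτσ).2 hrτ⟩

def posSign {α : Type*} [LinearOrder α] (T : Finset α) (x : α) : ℤ :=
  (-1) ^ (T.filter (· < x)).card

section posSign

variable {α : Type*} [LinearOrder α] {T : Finset α} {x v : α}

lemma posSign_mul_self : posSign T x * posSign T x = 1 := by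
  rw [posSign, ← pow_add, ← two_mul, pow_mul, neg_one_sq, one_pow]

lemma posSign_erase_self : posSign (T.erase x) x = posSign T x := by
  rw [posSign, posSign, filter_erase, erase_eq_of_notMem (by simp)]

lemma posSign_insert_self : posSign (insert x T) x = posSign T x := by
  rw [posSign, posSign, filter_insert, if_neg (lt_irrefl x)]

/-- Of the two counts `#{y < v}` and `#{y < x}` exactly one changes by one, according to
whether `x < v` or `v < x`. -/
lemma posSign_mul_posSign_erase (hx : x ∈ T) (hv : v ∉ T) :
    posSign T x * posSign (T.erase x) v = -(posSign T v * posSign (insert v T) x) := by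
  rcases (ne_of_mem_of_not_mem hx hv).lt_or_gt with hlt | hgt
  · have hv' : ((T.erase x).filter (· < v)).card + 1 = (T.filter (· < v)).card := by
      rw [filter_erase, card_erase_add_one (mem_filter.2 ⟨hx, hlt⟩)]
    have hx' : (insert v T).filter (· < x) = T.filter (· < x) := by
      rw [filter_insert, if_neg (lt_asymm hlt)]
    simp only [posSign, ← hv', hx', pow_succ]
    ring
  · have hxv : x ∉ T.filter (· < v) := fun h => lt_asymm hgt (mem_filter.1 h).2
    have hv' : (T.erase x).filter (· < v) = T.filter (· < v) := by
      rw [filter_erase, erase_eq_of_notMem hxv]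
    have hx' : ((insert v T).filter (· < x)).card = (T.filter (· < x)).card + 1 := by
      rw [filter_insert, if_pos hgt, card_insert_of_notMem fun h => hv (mem_filter.1 h).1]
    simp only [posSign, hv', hx', pow_succ]
    ring

end posSign

section RelCochain

variable {s : ℕ} {σ : Fin s → Finset ℕ} {j : ℕ} {ω : Finset ℕ} {c : ℕ}

lemma RelFace.card_erase (τ : RelFace σ j ω (c + 1)) {x : ℕ} (hx : x ∈ τ.1) :
    (τ.1.erase x).card = c := by
  rw [card_erase_of_mem hx, τ.2.2, Nat.add_sub_cancel]

def RelCochain.extend (φ : RelCochain σ j ω c) (U : Finset ℕ) : ℤ :=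
  if h : IsRelFace σ j ω U ∧ U.card = c then φ ⟨U, h⟩ else 0

lemma RelCochain.extend_of_isRelFace (φ : RelCochain σ j ω c) {U : Finset ℕ}
    (hU : IsRelFace σ j ω U) (hc : U.card = c) : φ.extend U = φ ⟨U, hU, hc⟩ :=
  dif_pos ⟨hU, hc⟩

lemma RelCochain.extend_val (φ : RelCochain σ j ω c) (τ : RelFace σ j ω c) :
    φ.extend τ.1 = φ τ :=
  dif_pos τ.2

lemma RelCochain.extend_of_not_isRelFace (φ : RelCochain σ j ω c) {U : Finset ℕ}
    (hU : ¬ IsRelFace σ j ω U) : φ.extend U = 0 :=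
  dif_neg fun h => hU h.1

lemma relDelta_apply (φ : RelCochain σ j ω c) (τ : RelFace σ j ω (c + 1)) :
    relDelta σ j ω c φ τ = ∑ x ∈ τ.1, posSign τ.1 x * φ.extend (τ.1.erase x) := by
  rw [relDelta, ← sum_attach τ.1]
  refine sum_congr rfl fun x _ => ?_
  by_cases hx : IsRelFace σ j ω (τ.1.erase x)
  · rw [dif_pos hx, φ.extend_of_isRelFace hx (τ.card_erase x.2)]
    rfl
  · rw [dif_neg hx, φ.extend_of_not_isRelFace hx, mul_zero]

lemma RelCochain.extend_zero (U : Finset ℕ) : (0 : RelCochain σ j ω c).extend U = 0 := by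
  unfold RelCochain.extend
  split_ifs <;> rfl

lemma relDelta_zero : relDelta σ j ω c 0 = 0 := by
  funext τ
  rw [relDelta_apply]
  exact sum_eq_zero fun x _ => by rw [RelCochain.extend_zero, mul_zero]

def coneOp (v : ℕ) (φ : RelCochain σ j ω (c + 1)) : RelCochain σ j ω c :=
  fun τ => if v ∈ τ.1 then 0 else posSign τ.1 v * φ.extend (insert v τ.1)

lemma coneOp_zero (v : ℕ) : coneOp v (0 : RelCochain σ j ω (c + 1)) = 0 := by
  funext τ
  simp only [coneOp, RelCochain.extend_zero, mul_zero, ite_self]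
  rfl

variable {r A : Finset ℕ} {v : ℕ}

lemma extend_coneOp (hface : ∀ τ, IsRelFace σ j ω τ ↔ r ⊆ τ ∧ τ ⊆ A) (hvr : v ∉ r)
    (φ : RelCochain σ j ω (c + 1)) {U : Finset ℕ} (hc : U.card = c) :
    (coneOp v φ).extend U = if v ∈ U then 0 else posSign U v * φ.extend (insert v U) := by
  by_cases hU : IsRelFace σ j ω U
  · rw [RelCochain.extend_of_isRelFace _ hU hc]
    rfl
  · rw [RelCochain.extend_of_not_isRelFace _ hU]
    split_ifs with hvU
    · rfl
    · have hvU' : ¬ IsRelFace σ j ω (insert v U) := by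
        rw [hface, subset_insert_iff_of_notMem hvr]
        rw [hface] at hU
        exact fun h => hU ⟨h.1, (subset_insert v U).trans h.2⟩
      rw [φ.extend_of_not_isRelFace hvU', mul_zero]

lemma relDelta_coneOp_of_mem (hface : ∀ τ, IsRelFace σ j ω τ ↔ r ⊆ τ ∧ τ ⊆ A)
    (hvr : v ∉ r) (φ : RelCochain σ j ω (c + 1)) (τ : RelFace σ j ω (c + 1)) (hv : v ∈ τ.1) :
    relDelta σ j ω c (coneOp v φ) τ = φ τ := by
  rw [relDelta_apply, sum_eq_single_of_mem v hv fun x hx hxv => ?_]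
  · rw [extend_coneOp hface hvr φ (τ.card_erase hv), if_neg (notMem_erase v _), insert_erase hv,
      posSign_erase_self, ← mul_assoc, posSign_mul_self, one_mul, φ.extend_val]
  · rw [extend_coneOp hface hvr φ (τ.card_erase hx), if_pos (mem_erase.2 ⟨Ne.symm hxv, hv⟩),
      mul_zero]

lemma relDelta_coneOp_of_notMem (hface : ∀ τ, IsRelFace σ j ω τ ↔ r ⊆ τ ∧ τ ⊆ A)
    (hvr : v ∉ r) (φ : RelCochain σ j ω (c + 1)) (τ : RelFace σ j ω (c + 1)) (hv : v ∉ τ.1) :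
    relDelta σ j ω c (coneOp v φ) τ =
      ∑ x ∈ τ.1, posSign τ.1 x * posSign (τ.1.erase x) v * φ.extend ((insert v τ.1).erase x) := by
  rw [relDelta_apply]
  refine sum_congr rfl fun x hx => ?_
  rw [extend_coneOp hface hvr φ (τ.card_erase hx), if_neg fun h => hv (mem_of_mem_erase h),
    erase_insert_of_ne (ne_of_mem_of_not_mem hx hv).symm, mul_assoc]

lemma coneOp_relDelta_of_notMem (hface : ∀ τ, IsRelFace σ j ω τ ↔ r ⊆ τ ∧ τ ⊆ A)
    (hvA : v ∈ A) (φ : RelCochain σ j ω c) (τ : RelFace σ j ω c) (hv : v ∉ τ.1) :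
    coneOp v (relDelta σ j ω c φ) τ =
      φ τ + ∑ x ∈ τ.1, posSign τ.1 v * posSign (insert v τ.1) x *
        φ.extend ((insert v τ.1).erase x) := by
  obtain ⟨hrτ, hτA⟩ := (hface τ.1).1 τ.2.1
  have hface' : IsRelFace σ j ω (insert v τ.1) :=
    (hface _).2 ⟨hrτ.trans (subset_insert v _), insert_subset hvA hτA⟩
  have hc : (insert v τ.1).card = c + 1 := by rw [card_insert_of_notMem hv, τ.2.2]
  rw [coneOp, if_neg hv, RelCochain.extend_of_isRelFace _ hface' hc,
    relDelta_apply φ (⟨insert v τ.1, hface', hc⟩ : RelFace σ j ω (c + 1)), sum_insert hv,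
    erase_insert hv, posSign_insert_self, φ.extend_val, mul_add, ← mul_assoc, posSign_mul_self,
    one_mul, mul_sum]
  simp only [mul_assoc]

theorem relDelta_coneOp_add_coneOp_relDelta (hface : ∀ τ, IsRelFace σ j ω τ ↔ r ⊆ τ ∧ τ ⊆ A)
    (hvA : v ∈ A) (hvr : v ∉ r) (φ : RelCochain σ j ω (c + 1)) :
    relDelta σ j ω c (coneOp v φ) + coneOp v (relDelta σ j ω (c + 1) φ) = φ := by
  funext τ
  rw [Pi.add_apply]
  by_cases hv : v ∈ τ.1
  · rw [relDelta_coneOp_of_mem hface hvr φ τ hv, coneOp, if_pos hv, add_zero]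
  · rw [relDelta_coneOp_of_notMem hface hvr φ τ hv, coneOp_relDelta_of_notMem hface hvA φ τ hv,
      add_left_comm, ← sum_add_distrib, sum_eq_zero fun x hx => ?_, add_zero]
    rw [← add_mul, posSign_mul_posSign_erase hx hv, neg_add_cancel, zero_mul]

end RelCochain

section IntervalComplex

variable {s : ℕ} {σ : Fin s → Finset ℕ} {j : ℕ} {ω r A : Finset ℕ} {c : ℕ}

lemma RelFace.val_eq_of_subset (hface : ∀ τ, IsRelFace σ j ω τ ↔ r ⊆ τ ∧ τ ⊆ A)
    (hAr : A ⊆ r) (τ : RelFace σ j ω c) : τ.1 = r ∧ A = r := by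
  obtain ⟨hrτ, hτA⟩ := (hface τ.1).1 τ.2.1
  exact ⟨(hτA.trans hAr).antisymm hrτ, hAr.antisymm (hrτ.trans hτA)⟩

lemma isEmpty_relFace (hface : ∀ τ, IsRelFace σ j ω τ ↔ r ⊆ τ ∧ τ ⊆ A) (hAr : A ⊆ r)
    (hn : ¬ (A = r ∧ r.card = c)) : IsEmpty (RelFace σ j ω c) := by
  refine ⟨fun τ => hn ?_⟩
  obtain ⟨hτ, hA⟩ := τ.val_eq_of_subset hface hAr
  exact ⟨hA, hτ ▸ τ.2.2⟩

theorem eq_zero_of_relDelta_eq_zero (hface : ∀ τ, IsRelFace σ j ω τ ↔ r ⊆ τ ∧ τ ⊆ A)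
    (hn : ¬ (A = r ∧ r.card = 0)) (φ : RelCochain σ j ω 0) (hφ : relDelta σ j ω 0 φ = 0) :
    φ = 0 := by
  by_cases hcone : ∃ v ∈ A, v ∉ r
  · obtain ⟨v, hvA, -⟩ := hcone
    funext τ
    have hτ : τ.1 = ∅ := card_eq_zero.1 τ.2.2
    have h := coneOp_relDelta_of_notMem hface hvA φ τ (by simp [hτ])
    rw [hφ, coneOp_zero, hτ, sum_empty, add_zero] at h
    exact h.symm
  · have := isEmpty_relFace hface (fun v hv => not_not.1 fun hvr => hcone ⟨v, hv, hvr⟩) hn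
    exact Subsingleton.elim _ _

theorem exists_eq_relDelta_of_relDelta_eq_zero
    (hface : ∀ τ, IsRelFace σ j ω τ ↔ r ⊆ τ ∧ τ ⊆ A) (hn : ¬ (A = r ∧ r.card = c + 1))
    (φ : RelCochain σ j ω (c + 1)) (hφ : relDelta σ j ω (c + 1) φ = 0) :
    ∃ ψ, φ = relDelta σ j ω c ψ := by
  by_cases hcone : ∃ v ∈ A, v ∉ r
  · obtain ⟨v, hvA, hvr⟩ := hcone
    have h := relDelta_coneOp_add_coneOp_relDelta hface hvA hvr φ
    rw [hφ, coneOp_zero, add_zero] at h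
    exact ⟨coneOp v φ, h.symm⟩
  · have := isEmpty_relFace hface (fun v hv => not_not.1 fun hvr => hcone ⟨v, hv, hvr⟩) hn
    exact ⟨0, Subsingleton.elim _ _⟩

lemma isRelFace_of_eq (hface : ∀ τ, IsRelFace σ j ω τ ↔ r ⊆ τ ∧ τ ⊆ A) (hA : A = r) :
    IsRelFace σ j ω r :=
  (hface r).2 ⟨subset_rfl, hA.ge⟩

theorem existsUnique_eq_mul_dualCochain (hface : ∀ τ, IsRelFace σ j ω τ ↔ r ⊆ τ ∧ τ ⊆ A)
    (hA : A = r) (hc : r.card = c) (φ : RelCochain σ j ω c) :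
    ∃! a : ℤ, φ = fun τ => a * dualCochain σ j ω c r τ := by
  let ρ : RelFace σ j ω c := ⟨r, isRelFace_of_eq hface hA, hc⟩
  refine ⟨φ ρ, funext fun τ => ?_, fun a ha => ?_⟩
  · have hτ : τ = ρ := Subtype.ext (τ.val_eq_of_subset hface hA.le).1
    simp [hτ, dualCochain, ρ]
  · simpa [dualCochain, ρ] using (congrFun ha ρ).symm

lemma relDelta_eq_zero_of_eq (hface : ∀ τ, IsRelFace σ j ω τ ↔ r ⊆ τ ∧ τ ⊆ A)
    (hA : A = r) (hc : r.card = c) (φ : RelCochain σ j ω c) : relDelta σ j ω c φ = 0 :=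
  have := isEmpty_relFace (c := c + 1) hface hA.le (by omega)
  Subsingleton.elim _ _

theorem eq_zero_of_mul_dualCochain_eq_relDelta
    (hface : ∀ τ, IsRelFace σ j ω τ ↔ r ⊆ τ ∧ τ ⊆ A) (hA : A = r) (hc : r.card = c + 1)
    (a : ℤ) (ψ : RelCochain σ j ω c)
    (h : (fun τ => a * dualCochain σ j ω (c + 1) r τ) = relDelta σ j ω c ψ) : a = 0 := by
  let ρ : RelFace σ j ω (c + 1) := ⟨r, isRelFace_of_eq hface hA, hc⟩
  have hρ := congrFun h ρ
  rw [relDelta_apply, sum_eq_zero fun x hx => ?_] at hρ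
  · simpa [dualCochain, ρ] using hρ
  · have hx : ¬ IsRelFace σ j ω (r.erase x) := by
      rw [hface]
      exact fun h => notMem_erase x r (h.1 hx)
    rw [ψ.extend_of_not_isRelFace hx, mul_zero]

end IntervalComplex

theorem shelling_relative_cohomology_general
    (s : ℕ) (σ : Fin s → Finset ℕ)
    (r : Fin s → Finset ℕ)
    (hshell : ∀ (jj : Fin s) (τ : Finset ℕ), τ ⊆ σ jj →
      ((¬ ∃ i : Fin s, i < jj ∧ τ ⊆ σ i) ↔ r jj ⊆ τ))
    (j : Fin s) (ω : Finset ℕ) :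
    -- degree 0 (faces of cardinality 0, i.e. the empty face):
    ((ω ∩ σ j = r j ∧ r j = ∅ →
        (∀ φ : RelCochain σ (j : ℕ) ω 0, relDelta σ (j : ℕ) ω 0 φ = 0 →
          ∃! a : ℤ, φ = fun τ => a * dualCochain σ (j : ℕ) ω 0 (r j) τ)) ∧
      (¬ (ω ∩ σ j = r j ∧ r j = ∅) →
        ∀ φ : RelCochain σ (j : ℕ) ω 0, relDelta σ (j : ℕ) ω 0 φ = 0 → φ = 0)) ∧
    -- positive degrees (faces of cardinality c + 1):
    (∀ c : ℕ,
      ((ω ∩ σ j = r j ∧ (r j).card = c + 1 →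
          relDelta σ (j : ℕ) ω (c + 1) (dualCochain σ (j : ℕ) ω (c + 1) (r j)) = 0 ∧
          (∀ φ : RelCochain σ (j : ℕ) ω (c + 1), relDelta σ (j : ℕ) ω (c + 1) φ = 0 →
            ∃ (a : ℤ) (ψ : RelCochain σ (j : ℕ) ω c),
              φ = (fun τ => a * dualCochain σ (j : ℕ) ω (c + 1) (r j) τ)
                    + relDelta σ (j : ℕ) ω c ψ) ∧
          (∀ (a : ℤ) (ψ : RelCochain σ (j : ℕ) ω c),
            (fun τ => a * dualCochain σ (j : ℕ) ω (c + 1) (r j) τ)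
                = relDelta σ (j : ℕ) ω c ψ → a = 0)) ∧
        (¬ (ω ∩ σ j = r j ∧ (r j).card = c + 1) →
          ∀ φ : RelCochain σ (j : ℕ) ω (c + 1), relDelta σ (j : ℕ) ω (c + 1) φ = 0 →
            ∃ ψ : RelCochain σ (j : ℕ) ω c, φ = relDelta σ (j : ℕ) ω c ψ))) := by
  have hface := isRelFace_iff_of_shelling (ω := ω) (hshell j)
  refine ⟨⟨fun ⟨hA, hr⟩ φ _ => ?_, fun hn => ?_⟩,
    fun c => ⟨fun ⟨hA, hc⟩ => ⟨?_, ?_, ?_⟩, fun hn => ?_⟩⟩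
  · exact existsUnique_eq_mul_dualCochain hface hA (by rw [hr, card_empty]) φ
  · exact eq_zero_of_relDelta_eq_zero hface (by rwa [card_eq_zero])
  · exact relDelta_eq_zero_of_eq hface hA hc _
  · intro φ _
    obtain ⟨a, ha, -⟩ := existsUnique_eq_mul_dualCochain hface hA hc φ
    exact ⟨a, 0, by rw [relDelta_zero, add_zero, ← ha]⟩
  · exact eq_zero_of_mul_dualCochain_eq_relDelta hface hA hc
  · exact exists_eq_relDelta_of_relDelta_eq_zero hface hn

/-- Lemma 6.6: let `K` be a pure `(n−1)`-dimensional shellable complex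
with shelling `σ₀,…,σ_{s−1}` and restriction faces `r i` (the new faces of `K_i` are
exactly the faces `τ ⊆ σ i` with `r i ⊆ τ`).  Then for any `ω`, the relative cohomology
`H^*((K_j)_ω, (K_{j−1})_ω)` is `ℤ`, generated by the class of the dual of `r j`, in
(cardinality) degree `|r j|` when `ω ∩ σ j = r j`, and vanishes otherwise.  The
conclusion is stated at the cochain level: in cardinality `c`, cocycles modulo
coboundaries form `ℤ·[r j]*` if `ω ∩ σ j = r j` and `c = |r j|`, and vanish otherwise. -/
theorem shelling_relative_cohomology
    (s n : ℕ) (σ : Fin s → Finset ℕ)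
    (hpure : ∀ i, (σ i).card = n)
    (r : Fin s → Finset ℕ)
    (hrsub : ∀ i, r i ⊆ σ i)
    (hshell : ∀ (jj : Fin s) (τ : Finset ℕ), τ ⊆ σ jj →
      ((¬ ∃ i : Fin s, i < jj ∧ τ ⊆ σ i) ↔ r jj ⊆ τ))
    (j : Fin s) (ω : Finset ℕ) :
    -- degree 0 (faces of cardinality 0, i.e. the empty face):
    ((ω ∩ σ j = r j ∧ r j = ∅ →
        (∀ φ : RelCochain σ (j : ℕ) ω 0, relDelta σ (j : ℕ) ω 0 φ = 0 →
          ∃! a : ℤ, φ = fun τ => a * dualCochain σ (j : ℕ) ω 0 (r j) τ)) ∧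
      (¬ (ω ∩ σ j = r j ∧ r j = ∅) →
        ∀ φ : RelCochain σ (j : ℕ) ω 0, relDelta σ (j : ℕ) ω 0 φ = 0 → φ = 0)) ∧
    -- positive degrees (faces of cardinality c + 1):
    (∀ c : ℕ,
      ((ω ∩ σ j = r j ∧ (r j).card = c + 1 →
          relDelta σ (j : ℕ) ω (c + 1) (dualCochain σ (j : ℕ) ω (c + 1) (r j)) = 0 ∧
          (∀ φ : RelCochain σ (j : ℕ) ω (c + 1), relDelta σ (j : ℕ) ω (c + 1) φ = 0 →
            ∃ (a : ℤ) (ψ : RelCochain σ (j : ℕ) ω c),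
              φ = (fun τ => a * dualCochain σ (j : ℕ) ω (c + 1) (r j) τ)
                    + relDelta σ (j : ℕ) ω c ψ) ∧
          (∀ (a : ℤ) (ψ : RelCochain σ (j : ℕ) ω c),
            (fun τ => a * dualCochain σ (j : ℕ) ω (c + 1) (r j) τ)
                = relDelta σ (j : ℕ) ω c ψ → a = 0)) ∧
        (¬ (ω ∩ σ j = r j ∧ (r j).card = c + 1) →
          ∀ φ : RelCochain σ (j : ℕ) ω (c + 1), relDelta σ (j : ℕ) ω (c + 1) φ = 0 →
            ∃ ψ : RelCochain σ (j : ℕ) ω c, φ = relDelta σ (j : ℕ) ω c ψ))) :=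
  shelling_relative_cohomology_general s σ r hshell j ω

end
end

section
/- Let R be the Z-algebra generated by u₁,…,u_m, t₁,…,t_m with deg u_i = 1, deg t_i = 0, subject to u_i t_i = u_i, t_i u_i = 0, u_i t_j = t_j u_i (i≠j), t_i² = t_i, u_i² = 0, u_i u_j = −u_j u_i (i≠j), t_i t_j = t_j t_i. Then as a Z-module, R is free with basis the square-free monomials u_σ t_{ω∖σ} for σ ⊆ ω ⊆ [m]. -/
/-!
The monomials span `R`: their span contains `1` and is stable under left multiplication by each
generator, because the relations move `u_i` and `t_i` into position, where they vanish against an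
`i ∈ σ`, absorb a repeated `t_i`, or produce `±u_{σ ∪ {i}}`.

For independence, `R` acts on the free `ℤ`-module with basis `e_{σ,ω}` (`σ ⊆ ω`): `t_i` sends
`e_{σ,ω}` to `e_{σ,ω∪{i}}` and `u_i` sends it to `±e_{σ∪{i},ω∪{i}}`, both being zero if `i ∈ σ`.
These operators satisfy the defining relations, and `u_σ t_{ω∖σ}` maps `e_{∅,∅}` to `e_{σ,ω}`.
-/

open Finset

noncomputable section

/-- The free ℤ-algebra on generators `u₁,…,u_m` (left summand) and `t₁,…,t_m`
(right summand). -/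
abbrev FA (m : ℕ) := FreeAlgebra ℤ (Fin m ⊕ Fin m)

def uf (m : ℕ) (i : Fin m) : FA m := FreeAlgebra.ι ℤ (Sum.inl i)
def tf (m : ℕ) (i : Fin m) : FA m := FreeAlgebra.ι ℤ (Sum.inr i)

/-- The defining relations of the algebra `R`:
`uᵢtᵢ = uᵢ`, `tᵢuᵢ = 0`, `uᵢtⱼ = tⱼuᵢ` (i ≠ j), `tᵢ² = tᵢ`, `uᵢ² = 0`,
`uᵢuⱼ = −uⱼuᵢ` (i ≠ j), `tᵢtⱼ = tⱼtᵢ`. -/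
inductive RRel (m : ℕ) : FA m → FA m → Prop
  | ut_same (i : Fin m) : RRel m (uf m i * tf m i) (uf m i)
  | tu_same (i : Fin m) : RRel m (tf m i * uf m i) 0
  | ut_comm {i j : Fin m} (h : i ≠ j) : RRel m (uf m i * tf m j) (tf m j * uf m i)
  | tt_same (i : Fin m) : RRel m (tf m i * tf m i) (tf m i)
  | uu_same (i : Fin m) : RRel m (uf m i * uf m i) 0
  | uu_anti {i j : Fin m} (h : i ≠ j) : RRel m (uf m i * uf m j) (-(uf m j * uf m i))
  | tt_comm (i j : Fin m) : RRel m (tf m i * tf m j) (tf m j * tf m i)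

/-- The algebra `R`: the quotient of the free algebra by the relations above. -/
abbrev RAlg (m : ℕ) := RingQuot (RRel m)

def uq (m : ℕ) (i : Fin m) : RAlg m := RingQuot.mkRingHom (RRel m) (uf m i)
def tq (m : ℕ) (i : Fin m) : RAlg m := RingQuot.mkRingHom (RRel m) (tf m i)

/-- `u_σ`: the product of the `u_i`, `i ∈ σ`, in increasing order. -/
def uProd (m : ℕ) (σ : Finset (Fin m)) : RAlg m :=
  ((σ.sort (· ≤ ·)).map (uq m)).prod

/-- `t_τ`: the product of the `t_i`, `i ∈ τ`, in increasing order. -/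
def tProd (m : ℕ) (τ : Finset (Fin m)) : RAlg m :=
  ((τ.sort (· ≤ ·)).map (tq m)).prod

/-- The square-free monomial `u_σ t_{ω∖σ}` indexed by a pair `σ ⊆ ω ⊆ [m]`. -/
def rMonomial (m : ℕ) (p : {q : Finset (Fin m) × Finset (Fin m) // q.1 ⊆ q.2}) :
    RAlg m :=
  uProd m p.1.1 * tProd m (p.1.2 \ p.1.1)

theorem List.Perm.prod_map_eq_or_eq_neg {α M : Type*} [Monoid M] [HasDistribNeg M]
    {f : α → M} (hf : ∀ a b, a ≠ b → f a * f b = -(f b * f a)) {l l' : List α}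
    (h : l.Perm l') :
    (l.map f).prod = (l'.map f).prod ∨ (l.map f).prod = -(l'.map f).prod := by
  induction h with
  | nil => exact Or.inl rfl
  | cons x _ ih => rcases ih with e | e <;> simp [e]
  | swap x y l =>
    by_cases hxy : x = y
    · exact Or.inl (by rw [hxy])
    · right
      simp only [List.map_cons, List.prod_cons, ← mul_assoc, hf y x (Ne.symm hxy), neg_mul]
  | trans _ _ ih₁ ih₂ => rcases ih₁ with e₁ | e₁ <;> rcases ih₂ with e₂ | e₂ <;> simp [e₁, e₂]

theorem Finset.sort_insert_perm {α : Type*} [LinearOrder α] {a : α} {s : Finset α}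
    (ha : a ∉ s) : ((insert a s).sort (· ≤ ·)).Perm (a :: s.sort (· ≤ ·)) :=
  (sort_perm_toList _ _).trans <| (toList_insert ha).trans <|
    (List.Perm.cons a (sort_perm_toList _ _).symm)

theorem Submodule.span_eq_top_of_mul_mem {R A : Type*} [CommSemiring R] [Semiring A]
    [Algebra R A] {s t : Set A} (hs : Algebra.adjoin R s = ⊤) (h1 : (1 : A) ∈ span R t)
    (hmul : ∀ x ∈ s, ∀ y ∈ t, x * y ∈ span R t) : span R t = ⊤ := by
  have hleft : ∀ x ∈ s, ∀ y ∈ span R t, x * y ∈ span R t := fun x hx _ hy =>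
    (span_le (p := (span R t).comap (LinearMap.mulLeft R x))).2 (hmul x hx) hy
  have hclosure : (Submonoid.closure s : Set A) ⊆ span R t := fun z hz => by
    induction hz using Submonoid.closure_induction_left with
    | one => exact h1
    | mul_left x hx y _ ih => exact hleft x hx y ih
  refine eq_top_iff.2 fun z _ => span_le.2 hclosure ?_
  rw [← Algebra.adjoin_eq_span, hs]
  trivial

namespace RAlg

variable {m : ℕ}

abbrev Index (m : ℕ) := {q : Finset (Fin m) × Finset (Fin m) // q.1 ⊆ q.2}

-- The ring structure of `RAlg m` is not reducibly defeq to the semiring structure its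
-- multiplication is elaborated with, so `simp` cannot use `mul_neg` and `neg_mul` directly.
theorem mul_neg' (a b : RAlg m) : a * -b = -(a * b) := mul_neg a b

theorem neg_mul' (a b : RAlg m) : -a * b = -(a * b) := neg_mul a b

theorem uq_mul_tq_self (i : Fin m) : uq m i * tq m i = uq m i := by
  simpa [uq, tq] using RingQuot.mkRingHom_rel (RRel.ut_same i)

theorem tq_mul_uq_self (i : Fin m) : tq m i * uq m i = 0 := by
  simpa [uq, tq] using RingQuot.mkRingHom_rel (RRel.tu_same i)

theorem commute_tq_uq {i j : Fin m} (h : i ≠ j) : Commute (tq m j) (uq m i) := by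
  rw [commute_iff_eq]
  simpa [uq, tq] using (RingQuot.mkRingHom_rel (RRel.ut_comm h)).symm

theorem tq_mul_self (i : Fin m) : tq m i * tq m i = tq m i := by
  simpa [uq, tq] using RingQuot.mkRingHom_rel (RRel.tt_same i)

theorem uq_mul_self (i : Fin m) : uq m i * uq m i = 0 := by
  simpa [uq, tq] using RingQuot.mkRingHom_rel (RRel.uu_same i)

theorem uq_mul_uq_of_ne {i j : Fin m} (h : i ≠ j) : uq m i * uq m j = -(uq m j * uq m i) := by
  simpa [uq, tq] using RingQuot.mkRingHom_rel (RRel.uu_anti h)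

theorem commute_tq_tq (i j : Fin m) : Commute (tq m i) (tq m j) := by
  rw [commute_iff_eq]
  simpa [uq, tq] using RingQuot.mkRingHom_rel (RRel.tt_comm i j)

theorem tProd_insert (i : Fin m) (τ : Finset (Fin m)) :
    tProd m (insert i τ) = tq m i * tProd m τ := by
  have of_notMem : ∀ τ : Finset (Fin m), i ∉ τ → tProd m (insert i τ) = tq m i * tProd m τ :=
    fun τ hi => by
      rw [tProd, ((sort_insert_perm hi).map _).prod_eq'
        (List.pairwise_map.2 (List.pairwise_of_forall fun _ _ => commute_tq_tq _ _))]
      rfl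
  by_cases hi : i ∈ τ
  · rw [insert_eq_self.2 hi, ← insert_erase hi, of_notMem _ (notMem_erase i τ), ← mul_assoc,
      tq_mul_self]
  · exact of_notMem τ hi

theorem uProd_insert {i : Fin m} {σ : Finset (Fin m)} (hi : i ∉ σ) :
    uProd m (insert i σ) = uq m i * uProd m σ ∨
      uProd m (insert i σ) = -(uq m i * uProd m σ) := by
  simpa [uProd] using
    (sort_insert_perm hi).prod_map_eq_or_eq_neg (f := uq m) fun _ _ => uq_mul_uq_of_ne

theorem commute_tq_uProd {i : Fin m} {σ : Finset (Fin m)} (hi : i ∉ σ) :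
    Commute (tq m i) (uProd m σ) :=
  Commute.list_prod_right _ _ <| by
    simp only [List.mem_map, mem_sort]
    rintro _ ⟨j, hj, rfl⟩
    exact commute_tq_uq (ne_of_mem_of_not_mem hj hi)

theorem tq_mul_uProd_of_mem {i : Fin m} {σ : Finset (Fin m)} (hi : i ∈ σ) :
    tq m i * uProd m σ = 0 := by
  rw [← insert_erase hi]
  rcases uProd_insert (notMem_erase i σ) with e | e <;>
    simp [e, ← mul_assoc, tq_mul_uq_self, mul_neg']

theorem uq_mul_uProd_of_mem {i : Fin m} {σ : Finset (Fin m)} (hi : i ∈ σ) :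
    uq m i * uProd m σ = 0 := by
  rw [← insert_erase hi]
  rcases uProd_insert (notMem_erase i σ) with e | e <;>
    simp [e, ← mul_assoc, uq_mul_self, mul_neg']

theorem uProd_mul_tq_of_mem {i : Fin m} {σ : Finset (Fin m)} (hi : i ∈ σ) :
    uProd m σ * tq m i = uProd m σ := by
  rw [← insert_erase hi]
  have hu : uq m i * uProd m (σ.erase i) * tq m i = uq m i * uProd m (σ.erase i) := by
    rw [mul_assoc, ← (commute_tq_uProd (notMem_erase i σ)).eq, ← mul_assoc, uq_mul_tq_self]
  rcases uProd_insert (notMem_erase i σ) with e | e <;> simp [e, neg_mul', hu]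

theorem uProd_mul_tProd_insert_of_mem {i : Fin m} {σ : Finset (Fin m)} (hi : i ∈ σ)
    (τ : Finset (Fin m)) : uProd m σ * tProd m (insert i τ) = uProd m σ * tProd m τ := by
  rw [tProd_insert, ← mul_assoc, uProd_mul_tq_of_mem hi]

theorem tq_mul_rMonomial {i : Fin m} {σ ω : Finset (Fin m)} (h : σ ⊆ ω) (hi : i ∉ σ) :
    tq m i * rMonomial m ⟨(σ, ω), h⟩ =
      rMonomial m ⟨(σ, insert i ω), h.trans (subset_insert i ω)⟩ := by
  simp only [rMonomial]
  rw [← mul_assoc, (commute_tq_uProd hi).eq, mul_assoc, ← tProd_insert,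
    insert_sdiff_of_notMem _ hi]

theorem uq_mul_rMonomial {i : Fin m} {σ ω : Finset (Fin m)} (h : σ ⊆ ω) (hi : i ∉ σ) :
    uq m i * rMonomial m ⟨(σ, ω), h⟩ =
        rMonomial m ⟨(insert i σ, insert i ω), insert_subset_insert i h⟩ ∨
      uq m i * rMonomial m ⟨(σ, ω), h⟩ =
        -rMonomial m ⟨(insert i σ, insert i ω), insert_subset_insert i h⟩ := by
  have hsdiff : uProd m (insert i σ) * tProd m (ω \ σ) =
      uProd m (insert i σ) * tProd m (insert i ω \ insert i σ) := by
    have : insert i (ω \ σ) = insert i (insert i ω \ insert i σ) := by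
      ext a
      simp only [mem_insert, mem_sdiff]
      tauto
    rw [← uProd_mul_tProd_insert_of_mem (mem_insert_self i σ) (ω \ σ), this,
      uProd_mul_tProd_insert_of_mem (mem_insert_self i σ)]
  simp only [rMonomial, ← mul_assoc, ← hsdiff]
  rcases uProd_insert hi with e | e
  · exact Or.inl (by rw [e])
  · exact Or.inr (by rw [e, neg_mul', neg_neg])

theorem mul_rMonomial_mem_span {x : RAlg m} (hx : x ∈ Set.range (Sum.elim (uq m) (tq m)))
    (p : Index m) : x * rMonomial m p ∈ Submodule.span ℤ (Set.range (rMonomial m)) := by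
  obtain ⟨⟨σ, ω⟩, h⟩ := p
  have hmem : ∀ q, rMonomial m q ∈ Submodule.span ℤ (Set.range (rMonomial m)) :=
    fun q => Submodule.subset_span ⟨q, rfl⟩
  obtain ⟨i | i, rfl⟩ := hx
  · by_cases hi : i ∈ σ
    · simp [rMonomial, ← mul_assoc, uq_mul_uProd_of_mem hi]
    · rcases uq_mul_rMonomial h hi with e | e <;> simp only [Sum.elim_inl, e]
      · exact hmem _
      · exact neg_mem (hmem _)
  · by_cases hi : i ∈ σ
    · simp [rMonomial, ← mul_assoc, tq_mul_uProd_of_mem hi]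
    · simpa only [Sum.elim_inr, tq_mul_rMonomial h hi] using hmem _

theorem sumElim_uq_tq :
    Sum.elim (uq m) (tq m) = RingQuot.mkAlgHom ℤ (RRel m) ∘ FreeAlgebra.ι ℤ := by
  ext (i | i) <;> simp only [uq, tq, uf, tf, Function.comp_apply, Sum.elim_inl, Sum.elim_inr,
    ← RingQuot.mkAlgHom_coe ℤ (RRel m)] <;> rfl

theorem adjoin_range_uq_tq : Algebra.adjoin ℤ (Set.range (Sum.elim (uq m) (tq m))) = ⊤ := by
  rw [sumElim_uq_tq, Set.range_comp, ← AlgHom.map_adjoin, FreeAlgebra.adjoin_range_ι,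
    Algebra.map_top, AlgHom.range_eq_top]
  exact RingQuot.mkAlgHom_surjective ℤ (RRel m)

theorem span_rMonomial_eq_top : Submodule.span ℤ (Set.range (rMonomial m)) = ⊤ :=
  Submodule.span_eq_top_of_mul_mem adjoin_range_uq_tq
    (Submodule.subset_span ⟨⟨(∅, ∅), subset_refl _⟩, by simp [rMonomial, uProd, tProd]⟩)
    (fun x hx _ ⟨p, hp⟩ => hp ▸ mul_rMonomial_mem_span hx p)

-- Junk value `0` off `σ ⊆ ω`; it makes `uAct_vec` and `tAct_vec` hold unconditionally.
def vec (σ ω : Finset (Fin m)) : Index m →₀ ℤ :=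
  if h : σ ⊆ ω then Finsupp.single ⟨(σ, ω), h⟩ 1 else 0

-- `u_i u_σ = koszulSign i σ • u_{σ ∪ {i}}` for `i ∉ σ`: `u_i` moves past the `u_j` with `j < i`.
def koszulSign (i : Fin m) (σ : Finset (Fin m)) : ℤ := (-1) ^ #(σ.filter (· < i))

def uAct (i : Fin m) : Module.End ℤ (Index m →₀ ℤ) :=
  Finsupp.lift _ ℤ (Index m) fun p =>
    if i ∈ p.1.1 then 0 else koszulSign i p.1.1 • vec (insert i p.1.1) (insert i p.1.2)

def tAct (i : Fin m) : Module.End ℤ (Index m →₀ ℤ) :=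
  Finsupp.lift _ ℤ (Index m) fun p => if i ∈ p.1.1 then 0 else vec p.1.1 (insert i p.1.2)

theorem uAct_vec (i : Fin m) (σ ω : Finset (Fin m)) :
    uAct i (vec σ ω) = if i ∈ σ then 0 else koszulSign i σ • vec (insert i σ) (insert i ω) := by
  by_cases h : σ ⊆ ω
  · rw [vec, dif_pos h, uAct, Finsupp.lift_apply, Finsupp.sum_single_index (by simp), one_smul]
  · split_ifs with hi
    · simp [vec, h]
    · simp [vec, h, insert_subset_insert_iff hi]

theorem tAct_vec (i : Fin m) (σ ω : Finset (Fin m)) :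
    tAct i (vec σ ω) = if i ∈ σ then 0 else vec σ (insert i ω) := by
  by_cases h : σ ⊆ ω
  · rw [vec, dif_pos h, tAct, Finsupp.lift_apply, Finsupp.sum_single_index (by simp), one_smul]
  · split_ifs with hi
    · simp [vec, h]
    · simp [vec, h, subset_insert_iff_of_notMem hi]

theorem linearMap_ext_vec {φ ψ : Module.End ℤ (Index m →₀ ℤ)}
    (h : ∀ σ ω, φ (vec σ ω) = ψ (vec σ ω)) : φ = ψ :=
  Finsupp.lhom_ext' fun p => LinearMap.ext_ring <| by simpa [vec, p.2] using h p.1.1 p.1.2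

theorem koszulSign_insert (i : Fin m) {j : Fin m} {σ : Finset (Fin m)} (hj : j ∉ σ) :
    koszulSign i (insert j σ) = (if j < i then -1 else 1) * koszulSign i σ := by
  rw [koszulSign, koszulSign, filter_insert]
  split_ifs with h
  · rw [card_insert_of_notMem (by simp [hj]), pow_succ, mul_comm]
  · rw [one_mul]

theorem koszulSign_anticomm {i j : Fin m} {σ : Finset (Fin m)} (hij : i ≠ j) (hi : i ∉ σ)
    (hj : j ∉ σ) :
    koszulSign j σ * koszulSign i (insert j σ) =
      -(koszulSign i σ * koszulSign j (insert i σ)) := by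
  rw [koszulSign_insert i hj, koszulSign_insert j hi]
  rcases hij.lt_or_gt with h | h
  · rw [if_neg h.not_gt, if_pos h]; ring
  · rw [if_pos h, if_neg h.not_gt]; ring

theorem uAct_mul_tAct_self (i : Fin m) : uAct i * tAct i = uAct i :=
  linearMap_ext_vec fun σ ω => by by_cases hi : i ∈ σ <;> simp [hi, uAct_vec, tAct_vec]

theorem tAct_mul_uAct_self (i : Fin m) : tAct i * uAct i = 0 :=
  linearMap_ext_vec fun σ ω => by by_cases hi : i ∈ σ <;> simp [hi, uAct_vec, tAct_vec]

theorem uAct_mul_tAct_of_ne {i j : Fin m} (h : i ≠ j) : uAct i * tAct j = tAct j * uAct i :=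
  linearMap_ext_vec fun σ ω => by
    by_cases hi : i ∈ σ <;> by_cases hj : j ∈ σ <;>
      simp [hi, hj, h.symm, uAct_vec, tAct_vec, insert_comm]

theorem tAct_mul_self (i : Fin m) : tAct i * tAct i = tAct i :=
  linearMap_ext_vec fun σ ω => by by_cases hi : i ∈ σ <;> simp [hi, tAct_vec]

theorem uAct_mul_self (i : Fin m) : uAct i * uAct i = 0 :=
  linearMap_ext_vec fun σ ω => by by_cases hi : i ∈ σ <;> simp [hi, uAct_vec]

theorem uAct_mul_uAct_of_ne {i j : Fin m} (h : i ≠ j) :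
    uAct i * uAct j = -(uAct j * uAct i) :=
  linearMap_ext_vec fun σ ω => by
    by_cases hi : i ∈ σ
    · by_cases hj : j ∈ σ <;> simp [hi, hj, uAct_vec]
    by_cases hj : j ∈ σ
    · simp [hi, hj, uAct_vec]
    · simp [hi, hj, h, h.symm, uAct_vec, insert_comm i j, smul_smul,
        koszulSign_anticomm h hi hj, neg_smul]

theorem tAct_mul_tAct_comm (i j : Fin m) : tAct i * tAct j = tAct j * tAct i :=
  linearMap_ext_vec fun σ ω => by
    by_cases hi : i ∈ σ <;> by_cases hj : j ∈ σ <;> simp [hi, hj, tAct_vec, insert_comm]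

def act : RAlg m →ₐ[ℤ] Module.End ℤ (Index m →₀ ℤ) :=
  RingQuot.liftAlgHom ℤ ⟨FreeAlgebra.lift ℤ (Sum.elim uAct tAct), fun _ _ r => by
    cases r <;> simp [uf, tf, uAct_mul_tAct_self, tAct_mul_uAct_self, uAct_mul_tAct_of_ne,
      tAct_mul_self, uAct_mul_self, uAct_mul_uAct_of_ne, tAct_mul_tAct_comm, *]⟩

theorem act_sumElim_uq_tq (x : Fin m ⊕ Fin m) :
    act (Sum.elim (uq m) (tq m) x) = Sum.elim uAct tAct x := by
  rw [sumElim_uq_tq, Function.comp_apply, act, RingQuot.liftAlgHom_mkAlgHom_apply,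
    FreeAlgebra.lift_ι_apply]

theorem act_uq (i : Fin m) : act (uq m i) = uAct i := act_sumElim_uq_tq (.inl i)

theorem act_tq (i : Fin m) : act (tq m i) = tAct i := act_sumElim_uq_tq (.inr i)

theorem act_tProd_vec (τ : Finset (Fin m)) : act (tProd m τ) (vec ∅ ∅) = vec ∅ τ := by
  induction τ using Finset.induction_on with
  | empty => simp [tProd]
  | insert i τ _ ih => simp [tProd_insert, act_tq, ih, tAct_vec]

theorem act_uProd_vec (σ ω : Finset (Fin m)) : act (uProd m σ) (vec ∅ ω) = vec σ (σ ∪ ω) := by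
  induction σ using Finset.induction_on_min with
  | empty => simp [uProd]
  | insert i σ hlt ih =>
    have hi : i ∉ σ := fun h => lt_irrefl i (hlt i h)
    have hsign : koszulSign i σ = 1 := by
      rw [koszulSign, filter_false_of_mem fun x hx => (hlt x hx).not_gt, card_empty, pow_zero]
    rw [uProd, sort_insert (· ≤ ·) (fun x hx => (hlt x hx).le) hi, List.map_cons, List.prod_cons,
      ← uProd, map_mul, Module.End.mul_apply, ih, act_uq, uAct_vec, if_neg hi, hsign, one_smul,
      insert_union]

theorem act_rMonomial_vec (p : Index m) :
    act (rMonomial m p) (vec ∅ ∅) = Finsupp.single p 1 := by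
  obtain ⟨⟨σ, ω⟩, h⟩ := p
  rw [rMonomial, map_mul, Module.End.mul_apply, act_tProd_vec, act_uProd_vec,
    union_sdiff_of_subset h, vec, dif_pos h]

theorem linearIndependent_rMonomial : LinearIndependent ℤ (rMonomial m) := by
  refine LinearIndependent.of_comp (LinearMap.applyₗ (vec ∅ ∅) ∘ₗ act.toLinearMap) ?_
  convert Finsupp.linearIndependent_single_one ℤ (Index m)
  · exact act_rMonomial_vec _
  · exact Subsingleton.elim _ _ -- two `ℤ`-module structures on `Index m →₀ ℤ`

end RAlg

/-- as a ℤ-module, `R` is free with basis the square-free monomials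
`u_σ t_{ω∖σ}` for `σ ⊆ ω ⊆ [m]`. -/
theorem rAlg_free_on_monomials (m : ℕ) :
    LinearIndependent ℤ (rMonomial m) ∧
    Submodule.span ℤ (Set.range (rMonomial m)) = ⊤ :=
  ⟨RAlg.linearIndependent_rMonomial, RAlg.span_rMonomial_eq_top⟩

end
end

section
/- For finite disjoint unions: let ω₁, ω₂ be finite sets, ω ⊆ ω₁ ∪ ω₂ with |ω ∩ (ω₁ ∩ ω₂)| = k. Then Σ over pairs (ω₁', ω₂') with ω₁' ⊆ ω₁, ω₂' ⊆ ω₂, ω₁' ∪ ω₂' = ω of (−2)^{|ω₁'| + |ω₂'|} equals (−2)^{|ω|} if k = 0 and equals 0 if k > 0. -/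
/-! The sum factors over the elements of `ω`: an element lying only in `ω₁` (only in `ω₂`) must
go into `ω₁'` (into `ω₂'`) and contributes `-2`, while an element of `ω₁ ∩ ω₂` may go into `ω₁'`,
`ω₂'` or both, contributing `-2 - 2 + (-2) * (-2) = 0`. -/

open Finset

namespace Finset

variable {α R : Type*} [DecidableEq α] [CommSemiring R]

theorem insert_eq_insert_iff {a : α} {s t : Finset α} (hs : a ∉ s) (ht : a ∉ t) :
    insert a s = insert a t ↔ s = t :=
  ⟨fun h => insert_erase_invOn.2.injOn hs ht h, congrArg _⟩

theorem sum_powerset_sum_powerset_union_eq (u v : α → R) (s : Finset α) :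
    ∑ P ∈ s.powerset, ∑ Q ∈ s.powerset,
      (if P ∪ Q = s then (∏ a ∈ P, u a) * ∏ a ∈ Q, v a else 0) =
      ∏ a ∈ s, (u a + v a + u a * v a) := by
  induction s using Finset.induction_on with
  | empty => simp
  | @insert a s ha ih =>
    rw [prod_insert ha, ← ih, mul_sum]
    simp only [sum_powerset_insert ha, ← sum_add_distrib, mul_sum]
    refine sum_congr rfl fun P hP => sum_congr rfl fun Q hQ => ?_
    have haP : a ∉ P := fun h => ha (mem_powerset.1 hP h)
    have haQ : a ∉ Q := fun h => ha (mem_powerset.1 hQ h)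
    have haPQ : a ∉ P ∪ Q := by simp [haP, haQ]
    have hne : P ∪ Q ≠ insert a s := fun h => haPQ (h ▸ mem_insert_self a s)
    simp only [insert_union, union_insert, insert_idem, insert_eq_insert_iff haPQ ha, if_neg hne,
      prod_insert haP, prod_insert haQ]
    split_ifs <;> ring

theorem prod_ite_mem_eq_ite_subset (P A : Finset α) (x : R) :
    ∏ a ∈ P, (if a ∈ A then x else 0) = if P ⊆ A then x ^ #P else 0 := by
  split_ifs with hPA
  · exact prod_eq_pow_card fun a ha => if_pos (hPA ha)
  · obtain ⟨a, haP, haA⟩ := not_subset.1 hPA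
    exact prod_eq_zero haP (if_neg haA)

theorem sum_filter_powerset_product_union_eq (A B U : Finset α) (x y : R) :
    ∑ p ∈ (A.powerset ×ˢ B.powerset).filter (fun p => p.1 ∪ p.2 = U), x ^ #p.1 * y ^ #p.2 =
      ∏ a ∈ U, ((if a ∈ A then x else 0) + (if a ∈ B then y else 0) +
        (if a ∈ A then x else 0) * (if a ∈ B then y else 0)) := by
  set f : Finset α × Finset α → R := fun p =>
    (∏ a ∈ p.1, if a ∈ A then x else 0) * ∏ a ∈ p.2, if a ∈ B then y else 0
  have hsub : (A.powerset ×ˢ B.powerset).filter (fun p => p.1 ∪ p.2 = U) ⊆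
      (U.powerset ×ˢ U.powerset).filter (fun p => p.1 ∪ p.2 = U) := by
    intro p
    simp only [mem_filter, mem_product, mem_powerset]
    rintro ⟨-, rfl⟩
    exact ⟨⟨subset_union_left, subset_union_right⟩, rfl⟩
  calc _ = ∑ p ∈ (A.powerset ×ˢ B.powerset).filter (fun p => p.1 ∪ p.2 = U), f p := by
        refine sum_congr rfl fun p hp => ?_
        simp only [mem_filter, mem_product, mem_powerset] at hp
        simp only [f, prod_ite_mem_eq_ite_subset, if_pos hp.1.1, if_pos hp.1.2]
    _ = ∑ p ∈ (U.powerset ×ˢ U.powerset).filter (fun p => p.1 ∪ p.2 = U), f p := by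
        refine sum_subset hsub fun p hpU hpAB => ?_
        simp only [mem_filter, mem_product, mem_powerset, (mem_filter.1 hpU).2] at hpAB
        simp only [f, prod_ite_mem_eq_ite_subset]
        split_ifs with h₁ h₂ <;> simp_all
    _ = _ := by
        rw [sum_filter, sum_product]
        exact sum_powerset_sum_powerset_union_eq _ _ U

end Finset

/-- for finite sets `ω ⊆ ω₁ ∪ ω₂` with `k = |ω ∩ (ω₁ ∩ ω₂)|`, the sum
over pairs `(ω₁', ω₂')` with `ω₁' ⊆ ω₁`, `ω₂' ⊆ ω₂`, `ω₁' ∪ ω₂' = ω` of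
`(−2)^{|ω₁'|+|ω₂'|}` equals `(−2)^{|ω|}` if `k = 0` and `0` if `k > 0`. -/
theorem sum_pairs_union_neg_two {α : Type*} [DecidableEq α]
    (ω₁ ω₂ ω : Finset α) (hω : ω ⊆ ω₁ ∪ ω₂) (k : ℕ)
    (hk : (ω ∩ (ω₁ ∩ ω₂)).card = k) :
    ∑ p ∈ (ω₁.powerset ×ˢ ω₂.powerset).filter (fun p => p.1 ∪ p.2 = ω),
        (-2 : ℤ) ^ (p.1.card + p.2.card) =
      if k = 0 then (-2) ^ ω.card else 0 := by
  simp only [pow_add, sum_filter_powerset_product_union_eq]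
  subst hk
  split_ifs with hk
  · refine prod_eq_pow_card fun a ha => ?_
    have hnot : ¬(a ∈ ω₁ ∧ a ∈ ω₂) := fun h =>
      (card_eq_zero.1 hk ▸ notMem_empty a) (mem_inter.2 ⟨ha, mem_inter.2 h⟩)
    rcases mem_union.1 (hω ha) with h | h <;> simp_all
  · obtain ⟨a, ha⟩ := card_ne_zero.1 hk
    simp only [mem_inter] at ha
    exact prod_eq_zero ha.1 (by simp [ha.2.1, ha.2.2])
end
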